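/- arXiv:2102.07521 — 6 statements merged into one kernel-verified Lean document; each statement's English description precedes it below -/
import Mathlib

section
/- For real numbers $x, y_1, \dots, y_\tau \in [-1/(20(1+\tau)), 1/(20(1+\tau))]$ and $a_1,\dots,a_\tau \in [0, 1/20]$, the inequality $\exp\left(\sum_{i=1}^\tau(-y_i - y_i^2 - 2a_i|y_i| - 2|x y_i|) - x - x^2\right) \le \exp\left(\sum_{i=1}^\tau(-y_i - y_i^2 - 2a_i|y_i|)\right) - x$ holds. -/
/-!
Write `S` for the exponent on the right and `t = x e^{-S}`. Then `e^S - x = e^S (1 - t)`, and the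
prod bound `1 - t ≥ exp (-t - t²)` reduces the claim to `t + t² ≤ x + x² + 2 |x| ∑ |yᵢ|`. The
hypotheses make `|x|` and `∑ |yᵢ|` at most `1/20` and `|S| ≤ (6/5) ∑ |yᵢ|`, so `e^{-S} - 1` is at most
`(13/10) ∑ |yᵢ|` in absolute value, and `t + t² - x - x² = x (e^{-S} - 1) (1 + x (e^{-S} + 1))`.
-/

open Real Finset

theorem Real.exp_sub_sq_le_one_add {v : ℝ} (hv : -1 / 2 ≤ v) : exp (v - v ^ 2) ≤ 1 + v := by
  have hpos : 0 < 1 + v := by linarith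
  have key : 1 ≤ (1 + v) * exp (v ^ 2 - v) := by
    rcases le_total 0 v with hv0 | hv0
    · nlinarith [add_one_le_exp (v ^ 2 - v), pow_nonneg hv0 3]
    · -- here `1 + u ≤ exp u` is too weak; the quadratic bound suffices down to `v = -1/2`
      have hq := quadratic_le_exp_of_nonneg (x := v ^ 2 - v) (by nlinarith)
      have hcubic : 0 ≤ 1 + v - v ^ 2 + v ^ 3 := by nlinarith
      nlinarith [mul_nonneg (mul_nonneg hcubic (sq_nonneg v)) hpos.le]
  rw [show v - v ^ 2 = -(v ^ 2 - v) by ring, exp_neg]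
  rwa [inv_le_iff_one_le_mul₀ (exp_pos _)]

theorem Real.abs_exp_sub_one_le_abs_add_sq {u : ℝ} (hu : |u| ≤ 1) :
    |exp u - 1| ≤ |u| + u ^ 2 :=
  calc |exp u - 1| = |(exp u - 1 - u) + u| := by ring_nf
    _ ≤ |exp u - 1 - u| + |u| := abs_add_le _ _
    _ ≤ u ^ 2 + |u| := by gcongr; exact abs_exp_sub_one_sub_id_le hu
    _ = |u| + u ^ 2 := add_comm _ _

theorem exp_sub_sub_sq_le_exp_sub {S x c : ℝ} (ht : x * exp (-S) ≤ 1 / 2)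
    (hc : x * exp (-S) + (x * exp (-S)) ^ 2 ≤ x + x ^ 2 + c) :
    exp (S - c - x - x ^ 2) ≤ exp S - x := by
  set t := x * exp (-S)
  calc exp (S - c - x - x ^ 2) ≤ exp S * exp (-t - (-t) ^ 2) := by
        rw [← exp_add]; gcongr; linarith [neg_sq t]
    _ ≤ exp S * (1 + -t) := by gcongr; exact exp_sub_sq_le_one_add (by linarith)
    _ = exp S - x := by
        rw [mul_add, mul_neg, mul_left_comm, ← exp_add, add_neg_cancel, exp_zero]; ring

theorem mul_add_sq_le_of_abs_sub_one_le {x E Y : ℝ} (hE : |E - 1| ≤ 13 / 10 * Y)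
    (hY : Y ≤ 1 / 20) (hx : |x| ≤ 1 / 20) :
    x * E + (x * E) ^ 2 ≤ x + x ^ 2 + 2 * |x| * Y := by
  have hY0 : 0 ≤ Y := by linarith [abs_nonneg (E - 1)]
  have hE' : |E + 1| ≤ 3 := by rw [abs_le] at hE ⊢; constructor <;> linarith
  have hfactor : |1 + x * (E + 1)| ≤ 23 / 20 := by
    calc |1 + x * (E + 1)| ≤ |1| + |x| * |E + 1| := by rw [← abs_mul]; exact abs_add_le _ _
      _ ≤ 1 + 1 / 20 * 3 := by rw [abs_one]; gcongr
      _ = 23 / 20 := by norm_num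
  calc x * E + (x * E) ^ 2 = x + x ^ 2 + x * (E - 1) * (1 + x * (E + 1)) := by ring
    _ ≤ x + x ^ 2 + |x| * |E - 1| * |1 + x * (E + 1)| := by
        rw [← abs_mul, ← abs_mul]; gcongr; exact le_abs_self _
    _ ≤ x + x ^ 2 + |x| * (13 / 10 * Y) * (23 / 20) := by gcongr
    _ ≤ x + x ^ 2 + 2 * |x| * Y := by nlinarith [mul_nonneg (abs_nonneg x) hY0]

theorem exp_sub_sub_sq_le_exp_sub_of_abs_le {S x Y : ℝ} (hS : |S| ≤ 6 / 5 * Y)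
    (hY : Y ≤ 1 / 20) (hx : |x| ≤ 1 / 20) :
    exp (S - 2 * |x| * Y - x - x ^ 2) ≤ exp S - x := by
  have hS' : |-S| ≤ 3 / 50 := by rw [abs_neg]; linarith
  have hE : |exp (-S) - 1| ≤ 13 / 10 * Y :=
    calc |exp (-S) - 1| ≤ |-S| + (-S) ^ 2 := abs_exp_sub_one_le_abs_add_sq (by linarith)
      _ ≤ |-S| * (53 / 50) := by rw [← sq_abs]; nlinarith [abs_nonneg (-S)]
      _ ≤ 13 / 10 * Y := by rw [abs_neg]; nlinarith [abs_nonneg S]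
  have ht : x * exp (-S) ≤ 1 / 2 :=
    calc x * exp (-S) ≤ |x| * |exp (-S)| := by rw [← abs_mul]; exact le_abs_self _
      _ ≤ 1 / 20 * 2 := by
          gcongr
          rw [abs_le] at hE ⊢; constructor <;> linarith [exp_pos (-S)]
      _ ≤ 1 / 2 := by norm_num
  exact exp_sub_sub_sq_le_exp_sub ht (mul_add_sq_le_of_abs_sub_one_le hE hY hx)

theorem abs_neg_sub_sq_sub_mul_abs_le {y a : ℝ} (hy : |y| ≤ 1 / 20)
    (ha : a ∈ Set.Icc (0 : ℝ) (1 / 20)) :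
    |(-y - y ^ 2 - 2 * a * |y|)| ≤ 6 / 5 * |y| := by
  obtain ⟨ha0, ha1⟩ := ha
  calc |(-y - y ^ 2 - 2 * a * |y|)| ≤ |y| + |y| ^ 2 + 2 * a * |y| := by
        rw [sq_abs, abs_le]
        constructor <;> nlinarith [neg_abs_le y, le_abs_self y, mul_nonneg ha0 (abs_nonneg y)]
    _ ≤ |y| + |y| * (1 / 20) + 2 * (1 / 20) * |y| := by rw [sq]; gcongr
    _ ≤ 6 / 5 * |y| := by linarith [abs_nonneg y]

theorem sum_abs_le_of_abs_le_div {n : ℕ} {c : ℝ} (hc : 0 ≤ c) {y : Fin n → ℝ}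
    (hy : ∀ i, |y i| ≤ c / (1 + n)) : ∑ i, |y i| ≤ c :=
  calc ∑ i, |y i| ≤ ∑ _i : Fin n, c / (1 + n) := sum_le_sum fun i _ => hy i
    _ = n / (1 + n) * c := by simp only [sum_const, card_univ, Fintype.card_fin, nsmul_eq_mul]; ring
    _ ≤ 1 * c := by gcongr; rw [div_le_one (by positivity)]; linarith
    _ = c := one_mul c

theorem stmt0_general (τ : ℕ) (x : ℝ) (y a : Fin τ → ℝ)
    (hx : |x| ≤ 1 / (20 * (1 + (τ : ℝ))))
    (hy : ∀ i, |y i| ≤ 1 / (20 * (1 + (τ : ℝ))))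
    (ha : ∀ i, a i ∈ Set.Icc (0 : ℝ) (1 / 20)) :
    Real.exp ((∑ i, (-(y i) - (y i) ^ 2 - 2 * a i * |y i| - 2 * |x * y i|)) - x - x ^ 2)
      ≤ Real.exp (∑ i, (-(y i) - (y i) ^ 2 - 2 * a i * |y i|)) - x := by
  have hδ : 1 / (20 * (1 + (τ : ℝ))) ≤ 1 / 20 := by gcongr; linarith [τ.cast_nonneg (α := ℝ)]
  have hY : ∑ i, |y i| ≤ 1 / 20 :=
    sum_abs_le_of_abs_le_div (by norm_num) fun i => by rw [div_div]; exact hy i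
  have hS : |∑ i, (-(y i) - (y i) ^ 2 - 2 * a i * |y i|)| ≤ 6 / 5 * ∑ i, |y i| := by
    rw [mul_sum]
    exact (abs_sum_le_sum_abs _ _).trans <| sum_le_sum fun i _ =>
      abs_neg_sub_sq_sub_mul_abs_le ((hy i).trans hδ) (ha i)
  have hsplit : ∑ i, (-(y i) - (y i) ^ 2 - 2 * a i * |y i| - 2 * |x * y i|)
      = ∑ i, (-(y i) - (y i) ^ 2 - 2 * a i * |y i|) - 2 * |x| * ∑ i, |y i| := by
    simp only [mul_sum, ← sum_sub_distrib, abs_mul, mul_assoc]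
  rw [hsplit]
  exact exp_sub_sub_sq_le_exp_sub_of_abs_le hS hY (hx.trans hδ)

theorem stmt0 (τ : ℕ) (hτ : 0 < τ) (x : ℝ) (y a : Fin τ → ℝ)
    (hx : |x| ≤ 1 / (20 * (1 + (τ : ℝ))))
    (hy : ∀ i, |y i| ≤ 1 / (20 * (1 + (τ : ℝ))))
    (ha : ∀ i, a i ∈ Set.Icc (0 : ℝ) (1 / 20)) :
    Real.exp ((∑ i, (-(y i) - (y i) ^ 2 - 2 * a i * |y i| - 2 * |x * y i|)) - x - x ^ 2)
      ≤ Real.exp (∑ i, (-(y i) - (y i) ^ 2 - 2 * a i * |y i|)) - x :=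
  stmt0_general τ x y a hx hy ha
end

section
/- Let $\tau \ge 1$ and let $y_1,\dots,y_\tau$ be reals with $|y_i| \le 1/(10\tau)$. Define $f(x) = x + x^2 + \sum_{i=1}^\tau (y_i + y_i^2 + 2|x||y_i|)$. Then the function $g(x) = \exp(-f(x))$ is concave on the interval $[-1/10, 1/10]$. -/
/-!
With `S = ∑ |yᵢ| ≤ 1/10` and `C = ∑ (yᵢ + yᵢ²)`, the exponent is `x² + x + C + 2 S |x|`, so `g` is
the pointwise minimum of `exp (-(x² + (1 ± 2S) x + C))`. Each of these is concave on
`[-1/10, 1/10]`: its second derivative is `((2x + 1 ± 2S)² - 2)` times a positive factor, and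
`|2x + 1 ± 2S| ≤ 7/5 < √2` there. A minimum of concave functions is concave.
-/

open Real Finset

lemma concaveOn_exp_neg_quadratic {D : Set ℝ} (hD : Convex ℝ D) (b c : ℝ)
    (h : ∀ x ∈ interior D, (2 * x + b) ^ 2 ≤ 2) :
    ConcaveOn ℝ D fun x => exp (-(x ^ 2 + b * x + c)) := by
  have hq : ∀ x : ℝ, HasDerivAt (fun x => -(x ^ 2 + b * x + c)) (-(2 * x + b)) x := fun x =>
    (((hasDerivAt_pow 2 x).add ((hasDerivAt_id x).const_mul b)).add_const c).neg.congr_deriv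
      (by simp)
  have hf' : ∀ x : ℝ, HasDerivAt (fun x => -(2 * x + b) * exp (-(x ^ 2 + b * x + c)))
      (((2 * x + b) ^ 2 - 2) * exp (-(x ^ 2 + b * x + c))) x := fun x => by
    have hl : HasDerivAt (fun x : ℝ => -(2 * x + b)) (-2) x :=
      (((hasDerivAt_id x).const_mul 2).add_const b).neg.congr_deriv (by simp)
    exact (hl.mul (hq x).exp).congr_deriv (by ring)
  refine concaveOn_of_hasDerivWithinAt2_nonpos hD (by fun_prop)
    (fun x _ => ((hq x).exp.congr_deriv (mul_comm _ _)).hasDerivWithinAt)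
    (fun x _ => (hf' x).hasDerivWithinAt) fun x hx => ?_
  exact mul_nonpos_of_nonpos_of_nonneg (by linarith [h x hx]) (exp_pos _).le

lemma sum_abs_le_of_forall_abs_le_div {n : ℕ} {ε : ℝ} (hε : 0 ≤ ε) (y : Fin n → ℝ)
    (hy : ∀ i, |y i| ≤ ε / n) : ∑ i, |y i| ≤ ε := by
  calc ∑ i, |y i| ≤ ∑ _i : Fin n, ε / n := sum_le_sum fun i _ => hy i
    _ = n * (ε / n) := by simp
    _ ≤ ε := by
      rcases n.eq_zero_or_pos with rfl | hn
      · simpa using hε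
      · rw [mul_div_cancel₀ _ (by positivity)]

lemma exp_neg_add_mul_abs {s : ℝ} (hs : 0 ≤ s) (a x : ℝ) :
    exp (-(a + s * |x|)) = min (exp (-(a + s * x))) (exp (-(a - s * x))) := by
  rw [← exp_monotone.map_min, abs_eq_max_neg, mul_max_of_nonneg _ _ hs, add_max, ← min_neg_neg]
  ring_nf

theorem stmt1_general (τ : ℕ) (y : Fin τ → ℝ)
    (hy : ∀ i, |y i| ≤ 1 / (10 * (τ : ℝ))) :
    ConcaveOn ℝ (Set.Icc (-(1 / 10) : ℝ) (1 / 10))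
      (fun x => Real.exp (-(x + x ^ 2 + ∑ i, (y i + (y i) ^ 2 + 2 * |x| * |y i|)))) := by
  set S := ∑ i, |y i|
  set C := ∑ i, (y i + y i ^ 2)
  have hS₀ : 0 ≤ S := sum_nonneg fun i _ => abs_nonneg _
  have hS : S ≤ 1 / 10 :=
    sum_abs_le_of_forall_abs_le_div (by norm_num) y fun i => (hy i).trans_eq (by ring)
  have hg : (fun x => exp (-(x + x ^ 2 + ∑ i, (y i + y i ^ 2 + 2 * |x| * |y i|)))) =
      (fun x => exp (-(x ^ 2 + (1 + 2 * S) * x + C))) ⊓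
        fun x => exp (-(x ^ 2 + (1 - 2 * S) * x + C)) := by
    funext x
    have hsum : ∑ i, (y i + y i ^ 2 + 2 * |x| * |y i|) = C + 2 * S * |x| := by
      rw [sum_add_distrib, ← mul_sum]; ring
    rw [hsum, ← add_assoc, exp_neg_add_mul_abs (by positivity)]
    simp only [Pi.inf_apply]
    ring_nf
  have hconc : ∀ b : ℝ, |b| ≤ 1 / 5 → ConcaveOn ℝ (Set.Icc (-(1 / 10) : ℝ) (1 / 10))
      fun x => exp (-(x ^ 2 + (1 + b) * x + C)) := fun b hb =>
    concaveOn_exp_neg_quadratic (convex_Icc _ _) _ _ fun x hx => by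
      rw [interior_Icc] at hx
      obtain ⟨hb₁, hb₂⟩ := abs_le.mp hb
      nlinarith [hx.1, hx.2]
  rw [hg, sub_eq_add_neg]
  exact (hconc _ (by rw [abs_of_nonneg] <;> linarith)).inf
    (hconc _ (by rw [abs_neg, abs_of_nonneg] <;> linarith))

theorem stmt1 (τ : ℕ) (hτ : 1 ≤ τ) (y : Fin τ → ℝ)
    (hy : ∀ i, |y i| ≤ 1 / (10 * (τ : ℝ))) :
    ConcaveOn ℝ (Set.Icc (-(1 / 10) : ℝ) (1 / 10))
      (fun x => Real.exp (-(x + x ^ 2 + ∑ i, (y i + (y i) ^ 2 + 2 * |x| * |y i|)))) :=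
  stmt1_general τ y hy
end

section
/- Let $\Phi: \mathbb{R} \to \mathbb{R}$ be a function with convex conjugate $\Phi^\star(u) = \sup_x (xu - \Phi(x))$. Suppose real numbers $\nu > 0$, $\varepsilon \ge 0$, sequences $h_1,\dots,h_T$ and $\hat h_1,\dots,\hat h_T$ with $|\hat h_t - h_t| \le \varepsilon$ for all $t$, and predictions $v_1,\dots,v_T$ satisfy $\nu - \sum_{t=1}^T v_t h_t \ge \Phi\big(-\sum_{t=1}^T (\hat h_t + \varepsilon)\big)$. Then for any $u \ge 0$, $\sum_{t=1}^T (v_t - u) h_t \le \nu + \Phi^\star(u) + 2u\varepsilon T$. -/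
theorem stmt6 (T : ℕ) (hT : 0 < T) (Φ Φstar : ℝ → ℝ)
    (hbdd : ∀ u : ℝ, BddAbove (Set.range fun x : ℝ => x * u - Φ x))
    (hstar : ∀ u : ℝ, Φstar u = ⨆ x : ℝ, (x * u - Φ x))
    (ν ε : ℝ) (hν : 0 < ν) (hε : 0 ≤ ε)
    (h hh v : Fin T → ℝ) (happ : ∀ t, |hh t - h t| ≤ ε)
    (hpot : ν - ∑ t, v t * h t ≥ Φ (-∑ t, (hh t + ε)))
    (u : ℝ) (hu : 0 ≤ u) :
    ∑ t, (v t - u) * h t ≤ ν + Φstar u + 2 * u * ε * T := by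
  set x : ℝ := -∑ t, (hh t + ε) with hx
  have fenchel : x * u - Φ x ≤ Φstar u := by
    rw [hstar u]
    exact le_ciSup (hbdd u) x
  -- ∑ v h ≤ ν + Φstar u - x u
  have h1 : ∑ t, v t * h t ≤ ν + Φstar u - x * u := by linarith
  have h2 : ∑ t, (h t - (hh t + ε)) ≤ ∑ _t : Fin T, (ε : ℝ) := by
    apply Finset.sum_le_sum
    intro t _
    have := abs_le.mp (happ t)
    linarith [this.1, this.2]
  have h3 : ∑ _t : Fin T, (ε : ℝ) = ε * T := by
    simp [Finset.sum_const, mul_comm]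
  have h4 : ∑ t, h t - (-x) ≤ ε * T := by
    rw [hx, neg_neg, ← Finset.sum_sub_distrib] at *
    linarith
  have h5 : ∑ t, (v t - u) * h t = ∑ t, v t * h t - u * ∑ t, h t := by
    rw [Finset.mul_sum, ← Finset.sum_sub_distrib]
    exact Finset.sum_congr rfl (fun t _ => by ring)
  rw [h5]
  have h6 : -x ≤ ∑ t, (h t) + ε * T + ε * T := by
    have : ∀ t ∈ Finset.univ, hh t + ε ≤ h t + 2 * ε := fun t _ => by
      have := abs_le.mp (happ t); linarith [this.2]
    have := Finset.sum_le_sum this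
    have hs : ∑ t, (h t + 2 * ε) = ∑ t, h t + 2 * (ε * T) := by
      rw [Finset.sum_add_distrib]
      simp [Finset.sum_const, mul_comm, mul_assoc, mul_left_comm]
    rw [hx, neg_neg]
    linarith [this, hs.le]
  have h7 : u * ∑ t, h t ≥ u * (-x) - u * (2 * (ε * T)) := by
    have := mul_le_mul_of_nonneg_left h6 hu
    nlinarith
  nlinarith [h7, h1]
end

section
/- Let $G > 0$, $d, p \in \mathbb{N}$, and $\mathbf{x} \in \mathbb{R}^d$ with $\|\mathbf{x}\|_2 \le G$. Define the random vector $\widehat{\mathbf{x}} = d \tilde{x}_{i_S} \mathbf{e}_{i_S}$, where $i_S$ is uniform on $\{1,\dots,d\}$, and independently each $\tilde{x}_i$ satisfies $\mathbb{E}[\tilde{x}_i] = x_i$ and $(x_i - \tilde{x}_i)^2 \le 2^{-2p} G^2$ almost surely. Then $\mathbb{E}[\widehat{\mathbf{x}}] = \mathbf{x}$ and $\mathbb{E}[\|\mathbf{x} - \widehat{\mathbf{x}}\|^2] \le 2d\|\mathbf{x}\|^2 + d^2 2^{-2p} G^2$. -/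
/-!
Conditioning on the independent uniform index gives
`E‖x - x̂‖² = (1/d) ∑ᵢ E‖x - d x̃ᵢ eᵢ‖²`, and each summand equals
`‖x‖² - xᵢ² + (xᵢ - d xᵢ)² + d² Var x̃ᵢ`. Summing yields the exact value
`(d - 1)‖x‖² + d ∑ᵢ Var x̃ᵢ`, and the almost sure error bound gives `Var x̃ᵢ ≤ 2^(-2p) G²`.
-/

open MeasureTheory ProbabilityTheory

theorem EuclideanSpace.norm_sub_single_sq {ι : Type*} [Fintype ι] [DecidableEq ι]
    (x : EuclideanSpace ℝ ι) (i : ι) (a : ℝ) :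
    ‖x - EuclideanSpace.single i a‖ ^ 2 = ‖x‖ ^ 2 - x i ^ 2 + (x i - a) ^ 2 := by
  rw [norm_sub_sq_real, EuclideanSpace.inner_single_right, PiLp.norm_single, Real.norm_eq_abs,
    sq_abs, conj_trivial]
  ring

section Moments

variable {Ω : Type*} [MeasurableSpace Ω] {μ : Measure Ω}

theorem memLp_of_sq_sub_le [IsFiniteMeasure μ] {Y : Ω → ℝ} (hY : AEStronglyMeasurable Y μ)
    {m ε : ℝ} (hε : ∀ᵐ ω ∂μ, (m - Y ω) ^ 2 ≤ ε) (p : ENNReal) : MemLp Y p μ := by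
  refine MemLp.of_bound hY (|m| + √ε) ?_
  filter_upwards [hε] with ω hω
  rw [Real.norm_eq_abs]
  calc |Y ω| = |m - (m - Y ω)| := by ring_nf
    _ ≤ |m| + |m - Y ω| := abs_sub _ _
    _ ≤ |m| + √ε := by gcongr; exact Real.abs_le_sqrt hω

theorem variance_le_of_sq_sub_le [IsProbabilityMeasure μ] {Y : Ω → ℝ} (hY : AEMeasurable Y μ)
    {ε : ℝ} (hε : ∀ᵐ ω ∂μ, (μ[Y] - Y ω) ^ 2 ≤ ε) : Var[Y; μ] ≤ ε := by
  rw [variance_eq_integral hY]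
  calc ∫ ω, (Y ω - μ[Y]) ^ 2 ∂μ ≤ ∫ _, ε ∂μ :=
        integral_mono_of_nonneg (.of_forall fun _ => sq_nonneg _) (integrable_const ε)
          (hε.mono fun ω h => (sub_sq_comm _ _).trans_le h)
    _ = ε := by simp

theorem integral_sq_const_sub_const_mul [IsProbabilityMeasure μ] {Y : Ω → ℝ} (hY : MemLp Y 2 μ)
    (a c : ℝ) :
    ∫ ω, (a - c * Y ω) ^ 2 ∂μ = (a - c * μ[Y]) ^ 2 + c ^ 2 * Var[Y; μ] := by
  have hZ : MemLp (fun ω => a - c * Y ω) 2 μ := (memLp_const a).sub (hY.const_mul c)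
  have hvar := variance_eq_sub hZ
  rw [variance_const_sub (hY.aestronglyMeasurable.const_mul c), variance_const_mul,
    integral_sub (integrable_const a) ((hY.integrable one_le_two).const_mul c),
    integral_const_mul] at hvar
  simp only [integral_const, probReal_univ, smul_eq_mul, one_mul, Pi.pow_apply] at hvar
  linarith

theorem ProbabilityTheory.IndepFun.integral_comp_eq_sum {ι β : Type*} [Fintype ι]
    [MeasurableSpace ι] [MeasurableSingletonClass ι] [MeasurableSpace β]
    {I : Ω → ι} {Y : Ω → β} (hIY : IndepFun I Y μ) (hI : Measurable I) (hY : Measurable Y)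
    {F : ι → β → ℝ} (hF : ∀ i, Measurable (F i))
    (hFY : ∀ i, Integrable (fun ω => F i (Y ω)) μ) :
    ∫ ω, F (I ω) (Y ω) ∂μ = ∑ i, μ.real (I ⁻¹' {i}) * ∫ ω, F i (Y ω) ∂μ := by
  have hpart : (fun ω => F (I ω) (Y ω))
      = fun ω => ∑ i, (I ⁻¹' {i}).indicator (fun ω => F i (Y ω)) ω := by
    ext ω
    classical
    simp [Set.indicator_apply, eq_comm (a := I ω)]
  rw [hpart, integral_finsetSum _ fun i _ => (hFY i).indicator (hI (measurableSet_singleton i))]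
  refine Finset.sum_congr rfl fun i _ => ?_
  rw [integral_indicator (hI (measurableSet_singleton i))]
  exact ((IndepFun_iff_Indep I Y μ).1 hIY).setIntegral_eq_mul hI.comap_le hY.aemeasurable
    ⟨{i}, measurableSet_singleton i, rfl⟩ (hF i).aestronglyMeasurable

theorem ProbabilityTheory.IndepFun.integral_comp_of_uniform {d : ℕ} {β : Type*}
    [MeasurableSpace β] {I : Ω → Fin d} {Y : Ω → β} (hIY : IndepFun I Y μ) (hI : Measurable I)
    (hY : Measurable Y) (hunif : ∀ i, μ {ω | I ω = i} = 1 / d)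
    {F : Fin d → β → ℝ} (hF : ∀ i, Measurable (F i))
    (hFY : ∀ i, Integrable (fun ω => F i (Y ω)) μ) :
    ∫ ω, F (I ω) (Y ω) ∂μ = (1 / d) * ∑ i, ∫ ω, F i (Y ω) ∂μ := by
  rw [hIY.integral_comp_eq_sum hI hY hF hFY, Finset.mul_sum]
  refine Finset.sum_congr rfl fun i _ => ?_
  rw [measureReal_def, show I ⁻¹' {i} = {ω | I ω = i} from rfl, hunif i]
  simp

end Moments

noncomputable def sparsify {d : ℕ} (i : Fin d) (t : Fin d → ℝ) : EuclideanSpace ℝ (Fin d) :=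
  EuclideanSpace.single i ((d : ℝ) * t i)

section Sparsify

variable {Ω : Type*} [MeasurableSpace Ω] {μ : Measure Ω} {d : ℕ} {I : Ω → Fin d}
  {Y : Ω → Fin d → ℝ}

theorem integral_sparsify_apply (hd : 0 < d) (hIY : IndepFun I Y μ) (hI : Measurable I)
    (hY : Measurable Y) (hunif : ∀ i, μ {ω | I ω = i} = 1 / d)
    (hint : ∀ j, Integrable (fun ω => Y ω j) μ) (i : Fin d) :
    ∫ ω, sparsify (I ω) (Y ω) i ∂μ = ∫ ω, Y ω i ∂μ := by
  simp only [sparsify, PiLp.single_apply]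
  rw [hIY.integral_comp_of_uniform hI hY hunif
      (F := fun j t => if i = j then (d : ℝ) * t j else 0)
      (fun j => by by_cases h : i = j <;> simp only [h, if_true, if_false] <;> fun_prop)
      (fun j => by by_cases h : i = j <;> simp [h, (hint j).const_mul]),
    Finset.sum_eq_single i (fun j _ hj => by simp [Ne.symm hj]) (by simp)]
  simp only [if_true, integral_const_mul]
  field_simp

theorem integral_norm_sub_sparsify_sq [IsProbabilityMeasure μ] (hd : 0 < d)
    (hIY : IndepFun I Y μ) (hI : Measurable I) (hY : Measurable Y)
    (hunif : ∀ i, μ {ω | I ω = i} = 1 / d) (hL2 : ∀ j, MemLp (fun ω => Y ω j) 2 μ)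
    (x : EuclideanSpace ℝ (Fin d)) (hmean : ∀ j, ∫ ω, Y ω j ∂μ = x j) :
    ∫ ω, ‖x - sparsify (I ω) (Y ω)‖ ^ 2 ∂μ
      = (d - 1) * ‖x‖ ^ 2 + d * ∑ j, Var[fun ω => Y ω j; μ] := by
  have hsq (j : Fin d) : Integrable (fun ω => (x j - d * Y ω j) ^ 2) μ :=
    ((memLp_const _).sub ((hL2 j).const_mul _)).integrable_sq
  have hmoment (j : Fin d) : ∫ ω, ‖x‖ ^ 2 - x j ^ 2 + (x j - d * Y ω j) ^ 2 ∂μ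
      = ‖x‖ ^ 2 + (d ^ 2 - 2 * d) * x j ^ 2 + d ^ 2 * Var[fun ω => Y ω j; μ] := by
    rw [integral_add (integrable_const _) (hsq j), integral_const,
      integral_sq_const_sub_const_mul (hL2 j), hmean j]
    simp only [probReal_univ, smul_eq_mul, one_mul]
    ring
  simp_rw [sparsify, EuclideanSpace.norm_sub_single_sq]
  rw [hIY.integral_comp_of_uniform hI hY hunif
    (F := fun j t => ‖x‖ ^ 2 - x j ^ 2 + (x j - d * t j) ^ 2) (fun j => by fun_prop)
    (fun j => (integrable_const _).add (hsq j))]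
  simp_rw [hmoment]
  rw [Finset.sum_add_distrib, Finset.sum_add_distrib, ← Finset.mul_sum, ← Finset.mul_sum,
    ← EuclideanSpace.real_norm_sq_eq]
  simp only [Finset.sum_const, Finset.card_univ, Fintype.card_fin, nsmul_eq_mul]
  field_simp
  ring

end Sparsify

theorem stmt12_general {Ω : Type*} [MeasurableSpace Ω] (μ : Measure Ω) [IsProbabilityMeasure μ]
    (d p : ℕ) (hd : 0 < d) (G : ℝ)
    (x : EuclideanSpace ℝ (Fin d))
    (iS : Ω → Fin d) (tilde : Ω → Fin d → ℝ)
    (hmeas_iS : Measurable iS) (hmeas_tilde : Measurable tilde)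
    (huniform : ∀ i, μ {ω | iS ω = i} = 1 / d)
    (hindep : IndepFun iS tilde μ)
    (hint : ∀ i, Integrable (fun ω => tilde ω i) μ)
    (hmean : ∀ i, ∫ ω, tilde ω i ∂μ = x i)
    (herr : ∀ i, ∀ᵐ ω ∂μ, (x i - tilde ω i) ^ 2 ≤ (2 : ℝ) ^ (-(2 * p : ℤ)) * G ^ 2) :
    (∀ i, ∫ ω, (EuclideanSpace.single (iS ω) ((d : ℝ) * tilde ω (iS ω)) :
        EuclideanSpace ℝ (Fin d)) i ∂μ = x i) ∧
    ∫ ω, ‖x - (EuclideanSpace.single (iS ω) ((d : ℝ) * tilde ω (iS ω)) :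
        EuclideanSpace ℝ (Fin d))‖ ^ 2 ∂μ
      ≤ 2 * d * ‖x‖ ^ 2 + (d : ℝ) ^ 2 * (2 : ℝ) ^ (-(2 * p : ℤ)) * G ^ 2 := by
  refine ⟨fun i => (integral_sparsify_apply hd hindep hmeas_iS hmeas_tilde huniform hint i).trans
    (hmean i), ?_⟩
  set ε : ℝ := (2 : ℝ) ^ (-(2 * p : ℤ)) * G ^ 2
  have hL2 (i : Fin d) : MemLp (fun ω => tilde ω i) 2 μ :=
    memLp_of_sq_sub_le (hint i).aestronglyMeasurable (herr i) 2
  have hvar (i : Fin d) : Var[fun ω => tilde ω i; μ] ≤ ε :=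
    variance_le_of_sq_sub_le (hint i).aemeasurable (by simpa only [hmean i] using herr i)
  calc ∫ ω, ‖x - sparsify (iS ω) (tilde ω)‖ ^ 2 ∂μ
      = (d - 1) * ‖x‖ ^ 2 + d * ∑ i, Var[fun ω => tilde ω i; μ] :=
        integral_norm_sub_sparsify_sq hd hindep hmeas_iS hmeas_tilde huniform hL2 x hmean
    _ ≤ (d - 1) * ‖x‖ ^ 2 + d * ∑ _i : Fin d, ε := by gcongr with i; exact hvar i
    _ ≤ 2 * d * ‖x‖ ^ 2 + d ^ 2 * ε := by
        simp only [Finset.sum_const, Finset.card_univ, Fintype.card_fin, nsmul_eq_mul]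
        nlinarith [sq_nonneg ‖x‖]
    _ = _ := by ring

theorem stmt12 {Ω : Type*} [MeasurableSpace Ω] (μ : Measure Ω) [IsProbabilityMeasure μ]
    (d p : ℕ) (hd : 0 < d) (G : ℝ) (hG : 0 < G)
    (x : EuclideanSpace ℝ (Fin d)) (hx : ‖x‖ ≤ G)
    (iS : Ω → Fin d) (tilde : Ω → Fin d → ℝ)
    (hmeas_iS : Measurable iS) (hmeas_tilde : Measurable tilde)
    (huniform : ∀ i, μ {ω | iS ω = i} = 1 / d)
    (hindep : IndepFun iS tilde μ)
    (hint : ∀ i, Integrable (fun ω => tilde ω i) μ)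
    (hmean : ∀ i, ∫ ω, tilde ω i ∂μ = x i)
    (herr : ∀ i, ∀ᵐ ω ∂μ, (x i - tilde ω i) ^ 2 ≤ (2 : ℝ) ^ (-(2 * p : ℤ)) * G ^ 2) :
    (∀ i, ∫ ω, (EuclideanSpace.single (iS ω) ((d : ℝ) * tilde ω (iS ω)) :
        EuclideanSpace ℝ (Fin d)) i ∂μ = x i) ∧
    ∫ ω, ‖x - (EuclideanSpace.single (iS ω) ((d : ℝ) * tilde ω (iS ω)) :
        EuclideanSpace ℝ (Fin d))‖ ^ 2 ∂μ
      ≤ 2 * d * ‖x‖ ^ 2 + (d : ℝ) ^ 2 * (2 : ℝ) ^ (-(2 * p : ℤ)) * G ^ 2 :=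
  stmt12_general μ d p hd G x iS tilde hmeas_iS hmeas_tilde huniform hindep hint hmean herr
end

section
/- Unprojected 1-dimensional online gradient descent with delayed gradients: for $\eta > 0$, gradients $h_1,\dots,h_T \in \mathbb{R}$, missing-index sets $\gamma(t) \subseteq \{1,\dots,t-1\}$, and predictions $w_t = -\eta \sum_{s < t,\, s \notin \gamma(t)} h_s$, the regret against any $u \in \mathbb{R}$ satisfies $\sum_{t=1}^T (w_t - u) h_t \le \frac{u^2}{2\eta} + \eta \sum_{t=1}^T \left(\frac{1}{2} h_t^2 + |h_t| \sum_{s \in \gamma(t)} |h_s|\right)$. -/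
/-!
Comparing with the full-information iterates $x_t = -\eta \sum_{s<t} h_s$, the one-step identity
$(x_{t+1} - u)^2 = (x_t - u)^2 - 2\eta (x_t - u) h_t + \eta^2 h_t^2$ telescopes to the standard OGD
bound. The delayed prediction differs from $x_t$ by $\eta \sum_{s \in \gamma(t)} h_s$ (restricted to
indices before $t$), which costs at most $\eta |h_t| \sum_{s \in \gamma(t)} |h_s|$ in round $t$.
-/

open Finset

def ogdIterate (η : ℝ) (h : ℕ → ℝ) (t : ℕ) : ℝ := -η * ∑ s ∈ Ico 1 t, h s

lemma ogdIterate_succ (η : ℝ) (h : ℕ → ℝ) {t : ℕ} (ht : 1 ≤ t) :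
    ogdIterate η h (t + 1) = ogdIterate η h t - η * h t := by
  rw [ogdIterate, ogdIterate, sum_Ico_succ_top ht]
  ring

lemma two_mul_ogd_regret_add_sq (η : ℝ) (h : ℕ → ℝ) (u : ℝ) (n : ℕ) :
    2 * η * ∑ t ∈ Icc 1 n, (ogdIterate η h t - u) * h t + (ogdIterate η h (n + 1) - u) ^ 2
      = u ^ 2 + η ^ 2 * ∑ t ∈ Icc 1 n, h t ^ 2 := by
  induction n with
  | zero => simp [ogdIterate]
  | succ n ih =>
    rw [sum_Icc_succ_top (by omega), sum_Icc_succ_top (by omega),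
      ogdIterate_succ η h (by omega : 1 ≤ n + 1)]
    linear_combination ih

lemma ogd_regret_le {η : ℝ} (hη : 0 < η) (h : ℕ → ℝ) (u : ℝ) (T : ℕ) :
    ∑ t ∈ Icc 1 T, (ogdIterate η h t - u) * h t
      ≤ u ^ 2 / (2 * η) + η * ∑ t ∈ Icc 1 T, (1 / 2) * h t ^ 2 := by
  have identity := two_mul_ogd_regret_add_sq η h u T
  rw [← mul_sum, ← sub_nonneg]
  have expand : u ^ 2 / (2 * η) + η * ((1 / 2) * ∑ t ∈ Icc 1 T, h t ^ 2)
      - ∑ t ∈ Icc 1 T, (ogdIterate η h t - u) * h t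
      = (ogdIterate η h (T + 1) - u) ^ 2 / (2 * η) := by
    field_simp
    linear_combination -identity
  rw [expand]
  positivity

lemma abs_sum_sub_sum_sdiff_le {ι : Type*} [DecidableEq ι] (A B : Finset ι) (f : ι → ℝ) :
    |∑ i ∈ A, f i - ∑ i ∈ A \ B, f i| ≤ ∑ i ∈ B, |f i| := by
  rw [← sum_inter_add_sum_sdiff A B f, add_sub_cancel_right]
  exact (abs_sum_le_sum_abs _ _).trans
    (sum_le_sum_of_subset_of_nonneg inter_subset_right fun _ _ _ => abs_nonneg _)

lemma delayed_regret_step_le {ι : Type*} [DecidableEq ι] {η : ℝ} (hη : 0 ≤ η)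
    (A B : Finset ι) (f : ι → ℝ) (u a : ℝ) :
    (-η * ∑ i ∈ A \ B, f i - u) * a
      ≤ (-η * ∑ i ∈ A, f i - u) * a + η * (|a| * ∑ i ∈ B, |f i|) := by
  have gap : (∑ i ∈ A, f i - ∑ i ∈ A \ B, f i) * a ≤ |a| * ∑ i ∈ B, |f i| :=
    calc (∑ i ∈ A, f i - ∑ i ∈ A \ B, f i) * a
        ≤ |∑ i ∈ A, f i - ∑ i ∈ A \ B, f i| * |a| := by rw [← abs_mul]; exact le_abs_self _
      _ ≤ (∑ i ∈ B, |f i|) * |a| := by gcongr; exact abs_sum_sub_sum_sdiff_le A B f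
      _ = |a| * ∑ i ∈ B, |f i| := mul_comm _ _
  linarith [mul_le_mul_of_nonneg_left gap hη]

theorem stmt15_general (T : ℕ) (η : ℝ) (hη : 0 < η) (h : ℕ → ℝ)
    (γ : ℕ → Finset ℕ) (u : ℝ) :
    ∑ t ∈ Finset.Icc 1 T,
        ((-η * ∑ s ∈ Finset.Ico 1 t \ γ t, h s) - u) * h t
      ≤ u ^ 2 / (2 * η)
        + η * ∑ t ∈ Finset.Icc 1 T, ((1 / 2) * (h t) ^ 2 + |h t| * ∑ s ∈ γ t, |h s|) := by
  calc ∑ t ∈ Icc 1 T, ((-η * ∑ s ∈ Ico 1 t \ γ t, h s) - u) * h t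
      ≤ ∑ t ∈ Icc 1 T, ((ogdIterate η h t - u) * h t + η * (|h t| * ∑ s ∈ γ t, |h s|)) :=
        sum_le_sum fun t _ => delayed_regret_step_le hη.le _ _ h u (h t)
    _ ≤ u ^ 2 / (2 * η) + η * ∑ t ∈ Icc 1 T, (1 / 2) * h t ^ 2
          + η * ∑ t ∈ Icc 1 T, |h t| * ∑ s ∈ γ t, |h s| := by
        rw [sum_add_distrib, ← mul_sum]
        gcongr
        exact ogd_regret_le hη h u T
    _ = u ^ 2 / (2 * η)
          + η * ∑ t ∈ Icc 1 T, ((1 / 2) * h t ^ 2 + |h t| * ∑ s ∈ γ t, |h s|) := by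
        rw [sum_add_distrib, mul_add, add_assoc]

theorem stmt15 (T : ℕ) (η : ℝ) (hη : 0 < η) (h : ℕ → ℝ)
    (γ : ℕ → Finset ℕ) (hγ : ∀ t, γ t ⊆ Finset.Ico 1 t) (u : ℝ) :
    ∑ t ∈ Finset.Icc 1 T,
        ((-η * ∑ s ∈ Finset.Ico 1 t \ γ t, h s) - u) * h t
      ≤ u ^ 2 / (2 * η)
        + η * ∑ t ∈ Finset.Icc 1 T, ((1 / 2) * (h t) ^ 2 + |h t| * ∑ s ∈ γ t, |h s|) :=
  stmt15_general T η hη h γ u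
end

section
/- Partition regret decomposition: let $\mathcal{Q}$ be a finite family of index sets and suppose for each $F \in \mathcal{Q}$ an algorithm produces predictions $\mathbf{w}_t^F \in \mathbb{R}^d$ whose linearized regret on the rounds assigned to $F$ satisfies $\tilde{\mathcal{R}}_F(\mathbf{0}) := \sum_{t : I_t \in F} \langle \mathbf{w}_t^F, \mathbf{g}_t \rangle \le \nu$. Let losses $\ell_t$ be convex with $\mathbf{g}_t$ a subgradient of $\ell_t$ at $\mathbf{w}_t := \sum_{F \in \mathcal{Q}} \mathbf{w}_t^F \mathbb{1}\{I_t \in F\}$. Then for any pairwise disjoint $F_1,\dots,F_r \in \mathcal{Q}$ covering all activated indices and any $\mathbf{u}_1,\dots,\mathbf{u}_r \in \mathbb{R}^d$: $\sum_{t=1}^T \ell_t(\mathbf{w}_t) - \sum_{j=1}^r \sum_{t : I_t \in F_j} \ell_t(\mathbf{u}_j) \le |\mathcal{Q}|\nu + \sum_{j=1}^r \sum_{t : I_t \in F_j} \langle \mathbf{w}_t^{F_j} - \mathbf{u}_j, \mathbf{g}_t \rangle$. -/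
/-!
Write `W t` for the combined prediction. By convexity each round contributes at most
`⟪W t - u_j, g t⟫`, where `F_j` is the unique member of the partition containing `I t`.
Summing `⟪W t, g t⟫` over all rounds regroups, by exchanging the sums, into the sum over all
`F ∈ 𝒬` of the linearized regrets `R̃_F(0)`. Those with `F` among the `F_j` appear on the right
hand side; each of the remaining ones is at most `ν`.
-/

open Finset Function

theorem Finset.sum_eq_sum_sum_filter_mem_of_cover {τ ι κ M : Type*} [Fintype τ] [Fintype κ]
    [DecidableEq ι] [AddCommMonoid M] (I : τ → ι) {F : κ → Finset ι}
    (hdisj : Pairwise (Disjoint on F)) (hcover : ∀ t, ∃ j, I t ∈ F j) (f : τ → M) :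
    ∑ t, f t = ∑ j, ∑ t ∈ univ.filter (fun t => I t ∈ F j), f t := by
  classical
  have hunion : univ.biUnion (fun j => univ.filter (fun t => I t ∈ F j)) = univ := by
    ext t
    simpa using hcover t
  rw [← sum_biUnion, hunion]
  intro j _ k _ hjk
  exact disjoint_filter.mpr fun t _ hj hk => disjoint_left.mp (hdisj hjk) hj hk

theorem Finset.sum_le_card_mul_add_sum_of_subset {β : Type*} [DecidableEq β] {s t : Finset β}
    (hst : s ⊆ t) {a : β → ℝ} {ν : ℝ} (ha : ∀ x ∈ t, a x ≤ ν) (hν : 0 ≤ ν) :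
    ∑ x ∈ t, a x ≤ t.card * ν + ∑ x ∈ s, a x := by
  rw [← sum_sdiff hst]
  have hrest : ∑ x ∈ t \ s, a x ≤ (t \ s).card * ν := by
    simpa using sum_le_card_nsmul _ _ ν fun x hx => ha x (mem_sdiff.mp hx).1
  have hcard : ((t \ s).card : ℝ) * ν ≤ t.card * ν := by
    gcongr
    exact sdiff_subset
  linarith

theorem sum_inner_sum_ite_mem {τ ι E : Type*} [Fintype τ] [DecidableEq ι]
    [NormedAddCommGroup E] [InnerProductSpace ℝ E] (I : τ → ι) (Q : Finset (Finset ι))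
    (w : Finset ι → τ → E) (g : τ → E) :
    ∑ t, inner ℝ (∑ G ∈ Q, if I t ∈ G then w G t else 0) (g t)
      = ∑ G ∈ Q, ∑ t ∈ univ.filter (fun t => I t ∈ G), inner ℝ (w G t) (g t) := by
  simp only [sum_inner, sum_filter]
  rw [sum_comm]
  refine sum_congr rfl fun G _ => sum_congr rfl fun t _ => ?_
  split_ifs <;> simp

theorem stmt18 {ι : Type*} [DecidableEq ι] (d T r : ℕ) (I : Fin T → ι)
    (Q : Finset (Finset ι))
    (w : Finset ι → Fin T → EuclideanSpace ℝ (Fin d))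
    (g : Fin T → EuclideanSpace ℝ (Fin d))
    (ℓ : Fin T → EuclideanSpace ℝ (Fin d) → ℝ)
    (ν : ℝ) (hν : 0 < ν)
    (hreg : ∀ F ∈ Q,
      ∑ t ∈ Finset.univ.filter (fun t => I t ∈ F), (inner ℝ (w F t) (g t) : ℝ) ≤ ν)
    (hsub : ∀ t (u : EuclideanSpace ℝ (Fin d)),
      ℓ t (∑ F ∈ Q, if I t ∈ F then w F t else 0) - ℓ t u
        ≤ (inner ℝ ((∑ F ∈ Q, if I t ∈ F then w F t else 0) - u) (g t) : ℝ))
    (F : Fin r → Finset ι) (hFQ : ∀ j, F j ∈ Q)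
    (hdisj : ∀ j k, j ≠ k → Disjoint (F j) (F k))
    (hcover : ∀ t, ∃ j, I t ∈ F j)
    (u : Fin r → EuclideanSpace ℝ (Fin d)) :
    ∑ t, ℓ t (∑ F' ∈ Q, if I t ∈ F' then w F' t else 0)
      - ∑ j, ∑ t ∈ Finset.univ.filter (fun t => I t ∈ F j), ℓ t (u j)
    ≤ Q.card * ν
      + ∑ j, ∑ t ∈ Finset.univ.filter (fun t => I t ∈ F j),
          (inner ℝ (w (F j) t - u j) (g t) : ℝ) := by
  set W := fun t => ∑ F' ∈ Q, if I t ∈ F' then w F' t else 0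
  set a := fun G => ∑ t ∈ univ.filter (fun t => I t ∈ G), inner ℝ (w G t) (g t)
  have hpairwise : Pairwise (Disjoint on F) := fun j k => hdisj j k
  have hpart (f : Fin T → ℝ) := sum_eq_sum_sum_filter_mem_of_cover I hpairwise hcover f
  have hpartition : ∑ j, a (F j) = ∑ G ∈ univ.image F, a G :=
    (sum_image_of_disjoint (by simp [a]) fun j _ k _ hjk => hpairwise hjk).symm
  have himage : univ.image F ⊆ Q := image_subset_iff.mpr fun j _ => hFQ j
  calc ∑ t, ℓ t (W t) - ∑ j, ∑ t ∈ univ.filter (fun t => I t ∈ F j), ℓ t (u j)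
      = ∑ j, ∑ t ∈ univ.filter (fun t => I t ∈ F j), (ℓ t (W t) - ℓ t (u j)) := by
        simp only [hpart fun t => ℓ t (W t), sum_sub_distrib]
    _ ≤ ∑ j, ∑ t ∈ univ.filter (fun t => I t ∈ F j), inner ℝ (W t - u j) (g t) :=
        sum_le_sum fun j _ => sum_le_sum fun t _ => hsub t (u j)
    _ = ∑ G ∈ Q, a G - ∑ j, ∑ t ∈ univ.filter (fun t => I t ∈ F j), inner ℝ (u j) (g t) := by
        simp only [inner_sub_left, sum_sub_distrib, ← hpart, W, a, sum_inner_sum_ite_mem]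
    _ ≤ Q.card * ν + ∑ j, a (F j)
          - ∑ j, ∑ t ∈ univ.filter (fun t => I t ∈ F j), inner ℝ (u j) (g t) := by
        rw [hpartition]
        gcongr
        exact sum_le_card_mul_add_sum_of_subset himage hreg hν.le
    _ = Q.card * ν + ∑ j, ∑ t ∈ univ.filter (fun t => I t ∈ F j),
          inner ℝ (w (F j) t - u j) (g t) := by
        simp only [a, inner_sub_left, sum_sub_distrib, add_sub_assoc]
end
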